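/- Let F ⊆ L be number fields such that L/F is a finite Galois extension, and let O_F and O_L denote their rings of integers. Let α ∈ O_L be such that L = F(α). If for every pair of distinct elements σ, τ of Gal(L/F) the difference σ(α) − τ(α) is a unit of O_L, then O_L = O_F[α], i.e., α forms a relative power integral basis for L/F (the O_F-subalgebra of L generated by α equals O_L). -/
import Mathlib


open NumberField

theorem relative_power_integral_basis_of_unit_differences
    (F L : Type*) [Field F] [Field L] [NumberField F] [NumberField L]
    [Algebra F L] [FiniteDimensional F L] [IsGalois F L]
    (α : 𝓞 L)
    (hgen : IntermediateField.adjoin F {(α : L)} = ⊤)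
    (hunit : ∀ σ τ : L ≃ₐ[F] L, σ ≠ τ →
      ∃ β : 𝓞 L, IsUnit β ∧ (β : L) = σ (α : L) - τ (α : L)) :
    Algebra.adjoin (𝓞 F) {α} = ⊤ := by
  classical
  have hαZ : IsIntegral ℤ (α : L) := RingOfIntegers.isIntegral_coe α
  have hαF : IsIntegral F (α : L) := hαZ.tower_top
  have hαOF : IsIntegral (𝓞 F) (α : L) := hαZ.tower_top
  -- the power basis of L/F generated by α
  let eqv : (IntermediateField.adjoin F {(α : L)}) ≃ₐ[F] L :=
    (IntermediateField.equivOfEq hgen).trans IntermediateField.topEquiv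
  let pb : PowerBasis F L := (IntermediateField.adjoin.powerBasis hαF).map eqv
  have hpbgen : pb.gen = (α : L) := rfl
  set d : F := Algebra.discr F pb.basis with hd
  -- d is nonzero
  have hd0 : d ≠ 0 := Algebra.discr_not_zero_of_basis F pb.basis
  -- d is integral over ℤ
  have hdint : IsIntegral ℤ d := by
    refine Algebra.discr_isIntegral F fun i => ?_
    rw [pb.basis_eq_pow, hpbgen]
    exact hαZ.pow _
  -- the inverse of d is integral over ℤ
  have hdinvint : IsIntegral ℤ (d⁻¹ : F) := by
    let E := AlgebraicClosure L
    have e : Fin pb.dim ≃ (L →ₐ[F] E) := by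
      refine Fintype.equivOfCardEq ?_
      rw [Fintype.card_fin, AlgHom.card]
      exact pb.finrank.symm
    have key := Algebra.discr_powerBasis_eq_prod F E pb e
    rw [hpbgen, ← hd] at key
    -- each factor is the image of a unit of 𝓞 L
    have hfac : ∀ i : Fin pb.dim, ∀ j ∈ Finset.Ioi i,
        IsIntegral ℤ (((e j (α : L) - e i (α : L)) ^ 2)⁻¹ : E) := by
      intro i j hj
      have hij : e j ≠ e i := fun h => (Finset.mem_Ioi.mp hj).ne'
        (e.injective h)
      -- restrict the embeddings to automorphisms of L
      set σ : L ≃ₐ[F] L := (e j).restrictNormal' L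
      set τ : L ≃ₐ[F] L := (e i).restrictNormal' L
      have hστ : σ ≠ τ := by
        intro h
        apply hij
        ext x
        have h1 : algebraMap L E (σ x) = e j x := (e j).restrictNormal_commutes L x
        have h2 : algebraMap L E (τ x) = e i x := (e i).restrictNormal_commutes L x
        rw [← h1, ← h2, h]
      obtain ⟨β, hβu, hβ⟩ := hunit σ τ hστ
      obtain ⟨γ, hγ⟩ := hβu.exists_right_inv
      have hβγ : (β : L) * (γ : L) = 1 := by
        rw [← map_mul, hγ, map_one]
      have hdiff : e j (α : L) - e i (α : L) = algebraMap L E (β : L) := by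
        have h1 : algebraMap L E (σ (α : L)) = e j (α : L) :=
          (e j).restrictNormal_commutes L (α : L)
        have h2 : algebraMap L E (τ (α : L)) = e i (α : L) :=
          (e i).restrictNormal_commutes L (α : L)
        rw [hβ, map_sub, h1, h2]
      have hβne : algebraMap L E (β : L) ≠ 0 := by
        intro h
        have : (β : L) = 0 := (algebraMap L E).injective (by simpa using h)
        rw [this, zero_mul] at hβγ
        exact zero_ne_one hβγ
      have : ((e j (α : L) - e i (α : L)) ^ 2)⁻¹ = algebraMap L E ((γ : L) ^ 2) := by
        rw [hdiff, ← map_pow]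
        symm
        apply eq_inv_of_mul_eq_one_left
        rw [← map_mul, ← map_one (algebraMap L E)]
        congr 1
        rw [← mul_pow, mul_comm, hβγ, one_pow]
      rw [this]
      exact ((RingOfIntegers.isIntegral_coe γ).pow 2).map (IsScalarTower.toAlgHom ℤ L E)
    -- the inverse of the image of d is integral
    have hinv : IsIntegral ℤ ((algebraMap F E d)⁻¹ : E) := by
      rw [key, ← Finset.prod_inv_distrib]
      refine IsIntegral.prod _ fun i _ => ?_
      rw [← Finset.prod_inv_distrib]
      exact IsIntegral.prod _ fun j hj => hfac i j hj
    rw [← map_inv₀] at hinv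
    exact (isIntegral_algebraMap_iff (algebraMap F E).injective).mp hinv
  -- the element d⁻¹ as an element of 𝓞 F
  let w : 𝓞 F := ⟨d⁻¹, hdinvint⟩
  -- main argument
  rw [eq_top_iff]
  rintro z -
  have hz : IsIntegral (𝓞 F) (z : L) := (RingOfIntegers.isIntegral_coe z).tower_top
  have hmem : d • (z : L) ∈ Algebra.adjoin (𝓞 F) {(α : L)} := by
    have h := Algebra.discr_mul_isIntegral_mem_adjoin (R := 𝓞 F) (K := F) (L := L)
      (B := pb) hαOF hz
    rwa [hpbgen, ← hd] at h
  have hzmem : (z : L) ∈ Algebra.adjoin (𝓞 F) {(α : L)} := by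
    have hw : algebraMap (𝓞 F) L w ∈ Algebra.adjoin (𝓞 F) {(α : L)} :=
      Subalgebra.algebraMap_mem _ _
    have heq : (z : L) = algebraMap (𝓞 F) L w * (d • (z : L)) := by
      rw [Algebra.smul_def]
      have hwL : algebraMap (𝓞 F) L w = algebraMap F L d⁻¹ := by
        rw [IsScalarTower.algebraMap_apply (𝓞 F) F L]
        rfl
      rw [hwL, map_inv₀, ← mul_assoc, inv_mul_cancel₀, one_mul]
      simpa using (algebraMap F L).injective.ne hd0 ∘ fun h => h
    rw [heq]
    exact mul_mem hw hmem
  -- transfer membership from L back to 𝓞 L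
  have hmap := AlgHom.map_adjoin (IsScalarTower.toAlgHom (𝓞 F) (𝓞 L) L) ({α} : Set (𝓞 L))
  have : (z : L) ∈ (Algebra.adjoin (𝓞 F) ({α} : Set (𝓞 L))).map
      (IsScalarTower.toAlgHom (𝓞 F) (𝓞 L) L) := by
    rw [hmap]
    simpa using hzmem
  obtain ⟨y, hy, hyz⟩ := this
  have : y = z := by
    apply RingOfIntegers.coe_injective
    exact hyz
  rwa [← this]
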